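/- (Lemma 2.2) Set ρ(x) = u(x)v(x). Then there is a unique x₀ ∈ ℝ with u(x₀) = v(x₀), and for all x ∈ ℝ: v(x) = √(ρ(x))·exp((1/2)·∫_{x₀}^x dt/ρ(t)) and u(x) = √(ρ(x))·exp(−(1/2)·∫_{x₀}^x dt/ρ(t)); moreover ρ is differentiable and |ρ'(x)| < 1 for all x ∈ ℝ. -/

import Mathlib

open MeasureTheory Filter Real Set
open scoped ENNReal

noncomputable section

/-- Condition (1.5): for every `a > 0`, `∫_{x-a}^{x+a} q(t) dt → ∞` as `|x| → ∞`. -/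
def Cond15 (q : ℝ → ℝ) : Prop :=
  ∀ a : ℝ, 0 < a → Tendsto (fun x => ∫ t in (x - a)..(x + a), q t) (cocompact ℝ) atTop

/-- `(u, v)` is a principal fundamental system of solutions (PFSS) of `z'' = q z`.
Local absolute continuity of `u'` together with `u'' = q u` a.e. is encoded via the
fundamental theorem of calculus: `u' b - u' a = ∫_a^b q t * u t dt` for all `a, b`. -/
def IsPFSS (q u v : ℝ → ℝ) : Prop :=
  ContDiff ℝ 1 u ∧ ContDiff ℝ 1 v ∧
  (∀ a b : ℝ, deriv u b - deriv u a = ∫ t in a..b, q t * u t) ∧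
  (∀ a b : ℝ, deriv v b - deriv v a = ∫ t in a..b, q t * v t) ∧
  (∀ x, 0 < u x) ∧ (∀ x, 0 < v x) ∧
  (∀ x, deriv u x < 0) ∧ (∀ x, 0 < deriv v x) ∧
  (∀ x, deriv v x * u x - deriv u x * v x = 1) ∧
  (∀ x, u x = v x * ∫ t in Set.Ioi x, ((v t) ^ 2)⁻¹) ∧
  Tendsto u atTop (nhds 0) ∧ Tendsto (deriv u) atTop (nhds 0) ∧
  Tendsto v atTop atTop ∧ Tendsto (deriv v) atTop atTop ∧
  Tendsto v atBot (nhds 0) ∧ Tendsto (deriv v) atBot (nhds 0) ∧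
  Tendsto u atBot atTop ∧ Tendsto (fun x => |deriv u x|) atBot atTop

/-- The Green function: `G(x,t) = u(x) v(t)` for `x ≥ t`, `G(x,t) = u(t) v(x)` for `x ≤ t`. -/
def GreenFn (u v : ℝ → ℝ) (x t : ℝ) : ℝ := if x ≤ t then u t * v x else u x * v t

/-- The Green operator `(Gf)(x) = ∫_ℝ G(x,t) f(t) dt`. -/
def GreenOp (u v f : ℝ → ℝ) (x : ℝ) : ℝ := ∫ t, GreenFn u v x t * f t

/-!
The Wronskian identity `v' u - u' v = 1` says exactly that `(log (v / u))' = 1 / (u v) = 1 / ρ`.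
Since `u - v` decreases strictly from `+∞` to `-∞`, there is a unique point `x₀` where
`log (v / u)` vanishes, and integrating from it gives `v / u = exp (∫_{x₀}^x 1/ρ)`; together with
`u v = ρ` this determines `u` and `v`. Finally `ρ' = u' v + u v'` is the sum of a negative and a
positive term whose difference is `1`, so `|ρ'| < 1`.
-/

section

variable {u v : ℝ → ℝ}

lemma existsUnique_eq_of_deriv_lt (hu : Differentiable ℝ u) (hv : Differentiable ℝ v)
    (hlt : ∀ x, deriv u x < deriv v x) (hbot : Tendsto (fun x => u x - v x) atBot atTop)
    (htop : Tendsto (fun x => u x - v x) atTop atBot) : ∃! x, u x = v x := by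
  have hanti : StrictAnti (fun x => u x - v x) := strictAnti_of_deriv_neg fun x => by
    rw [deriv_fun_sub (hu x) (hv x)]
    linarith [hlt x]
  obtain ⟨x₀, hx₀⟩ := (hu.continuous.sub hv.continuous).surjective' hbot htop 0
  refine ⟨x₀, sub_eq_zero.mp hx₀, fun x hx => hanti.injective ?_⟩
  simp only [hx, sub_eq_zero.mp hx₀, sub_self]

lemma hasDerivAt_log_div_of_wronskian {u' v' x : ℝ} (hu : HasDerivAt u u' x)
    (hv : HasDerivAt v v' x) (hux : 0 < u x) (hvx : 0 < v x) (hW : v' * u x - u' * v x = 1) :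
    HasDerivAt (fun y => log (v y / u y)) (u x * v x)⁻¹ x := by
  refine ((hv.div hu hux.ne').log (div_pos hvx hux).ne').congr_deriv ?_
  rw [Pi.div_apply, mul_comm (v x) u', hW]
  field_simp

lemma integral_inv_mul_eq_log_div (hu : Differentiable ℝ u) (hv : Differentiable ℝ v)
    (hupos : ∀ x, 0 < u x) (hvpos : ∀ x, 0 < v x)
    (hW : ∀ x, deriv v x * u x - deriv u x * v x = 1) (a b : ℝ) :
    ∫ t in a..b, (u t * v t)⁻¹ = log (v b / u b) - log (v a / u a) := by
  refine intervalIntegral.integral_eq_sub_of_hasDerivAt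
    (fun x _ => hasDerivAt_log_div_of_wronskian (hu x).hasDerivAt (hv x).hasDerivAt
      (hupos x) (hvpos x) (hW x)) (Continuous.intervalIntegrable ?_ a b)
  exact (hu.continuous.mul hv.continuous).inv₀ fun x => (mul_pos (hupos x) (hvpos x)).ne'

lemma abs_deriv_mul_lt_one_of_wronskian {x : ℝ} (hu : DifferentiableAt ℝ u x)
    (hv : DifferentiableAt ℝ v x) (hux : 0 < u x) (hvx : 0 < v x) (hu' : deriv u x < 0)
    (hv' : 0 < deriv v x) (hW : deriv v x * u x - deriv u x * v x = 1) :
    |deriv (fun s => u s * v s) x| < 1 := by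
  rw [deriv_fun_mul hu hv, abs_lt]
  have hneg : deriv u x * v x < 0 := mul_neg_of_neg_of_pos hu' hvx
  have hpos : 0 < deriv v x * u x := mul_pos hv' hux
  constructor <;> linarith [mul_comm (u x) (deriv v x)]

end

lemma sqrt_mul_mul_exp_half_log_div {a b : ℝ} (ha : 0 < a) (hb : 0 < b) :
    √(a * b) * exp (1 / 2 * log (b / a)) = b := by
  have hexp : exp (1 / 2 * log (b / a)) = √(b / a) := by
    rw [one_div_mul_eq_div, exp_half, exp_log (div_pos hb ha)]
  rw [hexp, ← sqrt_mul (mul_pos ha hb).le, show a * b * (b / a) = b ^ 2 by field_simp,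
    sqrt_sq hb.le]

lemma sqrt_mul_mul_exp_neg_half_log_div {a b : ℝ} (ha : 0 < a) (hb : 0 < b) :
    √(a * b) * exp (-(1 / 2 * log (b / a))) = a := by
  rw [← mul_neg, ← log_inv, inv_div, mul_comm a b]
  exact sqrt_mul_mul_exp_half_log_div hb ha

theorem lemma_2_2 (q u v : ℝ → ℝ)
    (huv : IsPFSS q u v) :
    ∃ x₀ : ℝ, u x₀ = v x₀ ∧ (∀ x' : ℝ, u x' = v x' → x' = x₀) ∧
      (∀ x : ℝ, v x = Real.sqrt (u x * v x) *
        Real.exp ((1 / 2) * ∫ t in x₀..x, (u t * v t)⁻¹)) ∧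
      (∀ x : ℝ, u x = Real.sqrt (u x * v x) *
        Real.exp (-((1 / 2) * ∫ t in x₀..x, (u t * v t)⁻¹))) ∧
      (∀ x : ℝ, DifferentiableAt ℝ (fun s => u s * v s) x) ∧
      (∀ x : ℝ, |deriv (fun s => u s * v s) x| < 1) := by
  obtain ⟨hu, hv, -, -, hupos, hvpos, hu', hv', hW, -, hu_top, -, hv_top, -, hv_bot, -,
    hu_bot, -⟩ := huv
  have hud : Differentiable ℝ u := hu.differentiable one_ne_zero
  have hvd : Differentiable ℝ v := hv.differentiable one_ne_zero
  have hbot : Tendsto (fun x => u x - v x) atBot atTop := by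
    simpa [sub_eq_add_neg] using hu_bot.atTop_add hv_bot.neg
  have htop : Tendsto (fun x => u x - v x) atTop atBot := by
    simpa [sub_eq_add_neg] using hu_top.add_atBot (tendsto_neg_atBot_iff.mpr hv_top)
  obtain ⟨x₀, hx₀, huniq⟩ := existsUnique_eq_of_deriv_lt hud hvd
    (fun x => (hu' x).trans (hv' x)) hbot htop
  have hint : ∀ x, ∫ t in x₀..x, (u t * v t)⁻¹ = log (v x / u x) := fun x => by
    rw [integral_inv_mul_eq_log_div hud hvd hupos hvpos hW, hx₀, div_self (hvpos x₀).ne',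
      log_one, sub_zero]
  refine ⟨x₀, hx₀, huniq, fun x => ?_, fun x => ?_, fun x => (hud x).mul (hvd x),
    fun x => abs_deriv_mul_lt_one_of_wronskian (hud x) (hvd x) (hupos x) (hvpos x) (hu' x)
      (hv' x) (hW x)⟩
  · rw [hint, sqrt_mul_mul_exp_half_log_div (hupos x) (hvpos x)]
  · rw [hint, sqrt_mul_mul_exp_neg_half_log_div (hupos x) (hvpos x)]
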